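/- Suppose Q ⊂ Q' are two completely integrable codistributions of constant ranks q and q' = q + c on a manifold. Then locally there exist functions g¹, …, g^c such that Q' = Q + span{dg¹, …, dg^c}; in particular, a nested chain of completely integrable codistributions Q₀ ⊂ Q₁ ⊂ ⋯ ⊂ Q_m each of corank 1 in the next can be simultaneously straightened: there are local coordinates in which Q_l = span{dz¹, …, dz^{q₀+l}} for all l. -/

import Mathlib

set_option synthInstance.maxHeartbeats 1000000
set_option maxHeartbeats 2000000

open Set Submodule Module

/-- A codistribution on `ℝᴺ` (a field of subspaces of the cotangent space) of
constant rank `q` which is completely integrable: locally spanned by the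
differentials of `q` smooth functions. -/
def ConstRankInt (N q : ℕ)
    (Q : (Fin N → ℝ) → Submodule ℝ ((Fin N → ℝ) →L[ℝ] ℝ)) : Prop :=
  (∀ x, Module.finrank ℝ (Q x) = q) ∧
  ∀ x₀ : Fin N → ℝ, ∃ U ∈ nhds x₀, ∃ h : Fin q → (Fin N → ℝ) → ℝ,
    (∀ i, ContDiffOn ℝ (⊤ : ℕ∞) (h i) U) ∧
    ∀ x ∈ U, Q x = Submodule.span ℝ (Set.range fun i => fderiv ℝ (h i) x)


lemma indep_eventually {ι : Type*} [Finite ι] {N : ℕ} (f : ι → (Fin N → ℝ) → ℝ)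
    (U : Set (Fin N → ℝ)) (hU : IsOpen U) {x₀ : Fin N → ℝ} (hx : x₀ ∈ U)
    (hf : ∀ i, ContDiffOn ℝ (⊤ : ℕ∞) (f i) U)
    (h0 : LinearIndependent ℝ fun i => fderiv ℝ (f i) x₀) :
    ∃ V, IsOpen V ∧ x₀ ∈ V ∧ V ⊆ U ∧
      ∀ x ∈ V, LinearIndependent ℝ fun i => fderiv ℝ (f i) x := by
  have hc : ContinuousOn (fun x => fun i => fderiv ℝ (f i) x) U :=
    continuousOn_pi.2 fun i => (hf i).continuousOn_fderiv_of_isOpen hU (by simp)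
  have hopen : IsOpen {v : ι → (Fin N → ℝ) →L[ℝ] ℝ | LinearIndependent ℝ v} :=
    isOpen_setOf_linearIndependent
  have h2 : IsOpen (U ∩ (fun x => fun i => fderiv ℝ (f i) x) ⁻¹' {v | LinearIndependent ℝ v}) :=
    hc.isOpen_inter_preimage hU hopen
  exact ⟨_, h2, ⟨hx, h0⟩, inter_subset_left, fun x hx' => hx'.2⟩


lemma exists_subfamily {M : Type*} [AddCommGroup M] [Module ℝ M] [FiniteDimensional ℝ M]
    {k c : ℕ} (A B : Submodule ℝ M) (hAB : A ≤ B) (v : Fin k → M)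
    (hspan : B = span ℝ (Set.range v)) (hrank : finrank ℝ A + c = finrank ℝ B) :
    ∃ σ : Fin c → Fin k, A ⊔ span ℝ (Set.range (v ∘ σ)) = B := by
  classical
  set π := A.mkQ with hπ
  set t : Set (M ⧸ A) := π '' (Set.range v) with ht
  obtain ⟨b, hbt, hbspan, hbind⟩ := exists_linearIndependent ℝ t
  have htfin : t.Finite := (Set.finite_range v).image π
  have hbfin : b.Finite := htfin.subset hbt
  haveI : Fintype b := hbfin.fintype
  -- span t = map π B
  have hspant : span ℝ t = B.map π := by
    rw [ht, ← Submodule.map_span, ← hspan]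
  -- finrank of map π B = c
  have hfr : finrank ℝ (B.map π) = c := by
    have h1 := LinearMap.finrank_range_add_finrank_ker (π.domRestrict B)
    rw [LinearMap.range_domRestrict, LinearMap.ker_domRestrict, Submodule.ker_mkQ] at h1
    have h2 : finrank ℝ (Submodule.comap B.subtype A) = finrank ℝ A :=
      (Submodule.comapSubtypeEquivOfLe hAB).finrank_eq
    have h3 : finrank ℝ B = finrank ℝ A + c := hrank.symm
    rw [h2] at h1
    -- h1 : finrank (map π B) + finrank A = finrank ↥B
    have h4 : finrank ℝ (B.map π) + finrank ℝ A = finrank ℝ B := h1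
    omega
  have hcard : Fintype.card b = c := by
    have := finrank_span_set_eq_card hbind
    rw [hbspan, hspant, hfr] at this
    rw [this, Set.toFinset_card]
  -- choose preimages
  have hsec : ∀ y : b, ∃ i : Fin k, π (v i) = y := by
    rintro ⟨y, hy⟩
    obtain ⟨m, ⟨i, rfl⟩, hm⟩ := hbt hy
    exact ⟨i, hm⟩
  choose s hs using hsec
  let e : Fin c ≃ b := (Fintype.equivFinOfCardEq hcard).symm
  refine ⟨fun j => s (e j), ?_⟩
  set S := span ℝ (Set.range (v ∘ fun j => s (e j))) with hS
  apply le_antisymm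
  · refine sup_le hAB (span_le.2 ?_)
    rintro _ ⟨j, rfl⟩
    exact hspan ▸ subset_span (Set.mem_range_self _)
  · -- B ≤ A ⊔ S
    have hmapS : S.map π = B.map π := by
      rw [hS, Submodule.map_span, ← Set.range_comp]
      have : (π ∘ (v ∘ fun j => s (e j))) = fun j => ((e j : M ⧸ A)) := by
        funext j; exact hs (e j)
      rw [this]
      have hrange : Set.range (fun j => ((e j : M ⧸ A))) = b := by
        ext y; constructor
        · rintro ⟨j, rfl⟩; exact (e j).2
        · intro hy; exact ⟨e.symm ⟨y, hy⟩, by simp⟩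
      rw [hrange, hbspan, hspant]
    have h5 : B ≤ Submodule.comap π (B.map π) := Submodule.le_comap_map π B
    rw [← hmapS, Submodule.comap_map_eq, Submodule.ker_mkQ] at h5
    exact h5.trans (by rw [sup_comm])

lemma partI (N q c : ℕ) (Q Q' : (Fin N → ℝ) → Submodule ℝ ((Fin N → ℝ) →L[ℝ] ℝ))
    (hQ : ConstRankInt N q Q) (hQ' : ConstRankInt N (q + c) Q')
    (hle : ∀ x, Q x ≤ Q' x) (x₀ : Fin N → ℝ) :
    ∃ U ∈ nhds x₀, ∃ g : Fin c → (Fin N → ℝ) → ℝ,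
      (∀ i, ContDiffOn ℝ (⊤ : ℕ∞) (g i) U) ∧
      ∀ x ∈ U, Q' x = Q x ⊔ Submodule.span ℝ (Set.range fun i => fderiv ℝ (g i) x) := by
  obtain ⟨hrk, hloc⟩ := hQ
  obtain ⟨hrk', hloc'⟩ := hQ'
  obtain ⟨U1, hU1, h, hhs, hhspan⟩ := hloc x₀
  obtain ⟨U2, hU2, h', hhs', hhspan'⟩ := hloc' x₀
  set U₀ : Set (Fin N → ℝ) := interior U1 ∩ interior U2 with hU₀def
  have hU₀open : IsOpen U₀ := isOpen_interior.inter isOpen_interior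
  have hx₀U₀ : x₀ ∈ U₀ :=
    ⟨mem_interior_iff_mem_nhds.2 hU1, mem_interior_iff_mem_nhds.2 hU2⟩
  have hU₀1 : U₀ ⊆ U1 := fun x hx => interior_subset hx.1
  have hU₀2 : U₀ ⊆ U2 := fun x hx => interior_subset hx.2
  -- choose the subfamily σ
  obtain ⟨σ, hσ⟩ := exists_subfamily (Q x₀) (Q' x₀) (hle x₀)
    (fun i => fderiv ℝ (h' i) x₀) (hhspan' x₀ (mem_of_mem_nhds hU2))
    (by rw [hrk, hrk'])
  -- the combined family
  set F : Fin q ⊕ Fin c → (Fin N → ℝ) → ℝ := Sum.elim h (fun j => h' (σ j)) with hFdef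
  have hFs : ∀ i, ContDiffOn ℝ (⊤ : ℕ∞) (F i) U₀ := by
    rintro (a | b)
    · exact (hhs a).mono hU₀1
    · exact (hhs' (σ b)).mono hU₀2
  have hFsplit : ∀ x : Fin N → ℝ,
      Submodule.span ℝ (Set.range fun i => fderiv ℝ (F i) x) =
        Submodule.span ℝ (Set.range fun i => fderiv ℝ (h i) x) ⊔
          Submodule.span ℝ (Set.range fun j => fderiv ℝ (h' (σ j)) x) := by
    intro x
    have h1 : (fun i => fderiv ℝ (F i) x) =
        Sum.elim (fun i => fderiv ℝ (h i) x) (fun j => fderiv ℝ (h' (σ j)) x) := by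
      funext i; cases i <;> rfl
    rw [h1, Sum.elim_range, Submodule.span_union]
  have hspan₀ : Submodule.span ℝ (Set.range fun i => fderiv ℝ (F i) x₀) = Q' x₀ := by
    rw [hFsplit, ← hhspan x₀ (mem_of_mem_nhds hU1)]
    have : (Set.range fun j => fderiv ℝ (h' (σ j)) x₀) =
        Set.range ((fun i => fderiv ℝ (h' i) x₀) ∘ σ) := rfl
    rw [this, hσ]
  have hindep₀ : LinearIndependent ℝ fun i => fderiv ℝ (F i) x₀ := by
    rw [linearIndependent_iff_card_eq_finrank_span]
    have : (Set.range fun i => fderiv ℝ (F i) x₀).finrank ℝ = q + c := by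
      unfold Set.finrank
      rw [hspan₀, hrk']
    rw [this]
    simp
  obtain ⟨V, hVopen, hx₀V, hVU₀, hVindep⟩ := indep_eventually F U₀ hU₀open hx₀U₀ hFs hindep₀
  refine ⟨V, hVopen.mem_nhds hx₀V, fun j => h' (σ j), fun j => (hhs' (σ j)).mono
    (fun x hx => hU₀2 (hVU₀ hx)), ?_⟩
  intro x hx
  have hxU1 : x ∈ U1 := hU₀1 (hVU₀ hx)
  have hxU2 : x ∈ U2 := hU₀2 (hVU₀ hx)
  have hle2 : Submodule.span ℝ (Set.range fun i => fderiv ℝ (F i) x) ≤ Q' x := by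
    rw [Submodule.span_le]
    rintro _ ⟨(a | b), rfl⟩
    · apply hle x
      rw [hhspan x hxU1]
      exact subset_span ⟨a, rfl⟩
    · rw [hhspan' x hxU2]
      exact subset_span ⟨σ b, rfl⟩
  have hfr : finrank ℝ (Submodule.span ℝ (Set.range fun i => fderiv ℝ (F i) x)) = q + c := by
    rw [finrank_span_eq_card (hVindep x hx)]
    simp
  have heq : Submodule.span ℝ (Set.range fun i => fderiv ℝ (F i) x) = Q' x :=
    Submodule.eq_of_le_of_finrank_le hle2 (by rw [hfr, hrk'])
  rw [← heq, hFsplit, ← hhspan x hxU1]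

lemma finrank_dualCLM (N : ℕ) : finrank ℝ ((Fin N → ℝ) →L[ℝ] ℝ) = N := by
  rw [← LinearEquiv.finrank_eq (LinearMap.toContinuousLinearMap (𝕜 := ℝ)
    (E := Fin N → ℝ) (F' := ℝ))]
  rw [Module.finrank_linearMap, Module.finrank_fin_fun, finrank_self, mul_one]


lemma span_proj (N : ℕ) :
    Submodule.span ℝ (Set.range fun j : Fin N =>
      (ContinuousLinearMap.proj j : (Fin N → ℝ) →L[ℝ] ℝ)) = ⊤ := by
  rw [eq_top_iff]
  rintro ℓ -
  have hrep : ℓ = ∑ j : Fin N, ℓ (Pi.single (M := fun _ : Fin N => ℝ) j 1) •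
      (ContinuousLinearMap.proj j : (Fin N → ℝ) →L[ℝ] ℝ) := by
    ext v
    rw [ContinuousLinearMap.sum_apply]
    simp only [ContinuousLinearMap.smul_apply, ContinuousLinearMap.proj_apply, smul_eq_mul]
    have hv : v = ∑ j : Fin N, v j • Pi.single (M := fun _ : Fin N => ℝ) j 1 := by
      funext i
      simp [Pi.single_apply]
    conv_lhs => rw [hv]
    rw [map_sum]
    congr 1
    funext j
    rw [map_smul]
    simp [mul_comm]
  rw [hrep]
  exact Submodule.sum_mem _ fun j _ =>
    Submodule.smul_mem _ _ (Submodule.subset_span ⟨j, rfl⟩)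


lemma chainLemma (N : ℕ) : ∀ (m q₀ : ℕ)
    (Q : Fin (m + 1) → (Fin N → ℝ) → Submodule ℝ ((Fin N → ℝ) →L[ℝ] ℝ)),
    (∀ l : Fin (m + 1), ConstRankInt N (q₀ + (l : ℕ)) (Q l)) →
    (∀ l : Fin m, ∀ x, Q l.castSucc x ≤ Q l.succ x) →
    ∀ x₀ : Fin N → ℝ, ∃ U ∈ nhds x₀, ∃ f : Fin (q₀ + m) → (Fin N → ℝ) → ℝ,
      (∀ i, ContDiffOn ℝ (⊤ : ℕ∞) (f i) U) ∧
      ∀ l : Fin (m + 1), ∀ x ∈ U, Q l x = Submodule.span ℝ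
        {ξ | ∃ i : Fin (q₀ + m), (i : ℕ) < q₀ + (l : ℕ) ∧ ξ = fderiv ℝ (f i) x} := by
  intro m
  induction m with
  | zero =>
    intro q₀ Q hQ _ x₀
    obtain ⟨U, hU, h, hhs, hhspan⟩ := (hQ ⟨0, Nat.zero_lt_one⟩).2 x₀
    refine ⟨U, hU, h, hhs, ?_⟩
    intro l x hx
    have hl : l = ⟨0, Nat.zero_lt_one⟩ := by
      ext; omega
    subst hl
    rw [hhspan x hx]
    congr 1
    ext ξ
    constructor
    · rintro ⟨i, rfl⟩
      exact ⟨i, by omega, rfl⟩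
    · rintro ⟨i, _, rfl⟩
      exact ⟨i, rfl⟩
  | succ m ih =>
    intro q₀ Q hQ hle x₀
    -- restricted chain
    obtain ⟨U₁, hU₁, f, hfs, hfspan⟩ := ih q₀ (fun l => Q l.castSucc)
      (fun l => by simpa using hQ l.castSucc)
      (fun l x => by
        have := hle l.castSucc x
        rwa [Fin.succ_castSucc] at this) x₀
    -- one more function from partI
    set lm : Fin (m + 2) := ⟨m, by omega⟩ with hlmdef
    set ll : Fin (m + 2) := ⟨m + 1, by omega⟩ with hlldef
    have hQm : ConstRankInt N ((q₀ + m) + 1) (Q ll) := hQ ll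
    obtain ⟨U₂, hU₂, g, hgs, hgspan⟩ := partI N (q₀ + m) 1 (Q lm) (Q ll)
      (hQ lm) hQm
      (fun x => by
        have h1 : (⟨m, Nat.lt_succ_self m⟩ : Fin (m + 1)).castSucc = lm := rfl
        have h2 : (⟨m, Nat.lt_succ_self m⟩ : Fin (m + 1)).succ = ll := rfl
        have := hle ⟨m, Nat.lt_succ_self m⟩ x
        rwa [h1, h2] at this) x₀
    refine ⟨U₁ ∩ U₂, Filter.inter_mem hU₁ hU₂, Fin.snoc f (g 0), ?_, ?_⟩
    · intro i
      induction i using Fin.lastCases with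
      | last =>
        rw [Fin.snoc_last]
        exact (hgs 0).mono inter_subset_right
      | cast j =>
        rw [Fin.snoc_castSucc]
        exact (hfs j).mono inter_subset_left
    · intro l x hx
      induction l using Fin.lastCases with
      | last =>
        have hll : Fin.last (m + 1) = ll := by ext; rfl
        have hlm : (Fin.last m).castSucc = lm := by ext; rfl
        rw [hll, hgspan x hx.2]
        have hQlm : Q lm x = Submodule.span ℝ
            {ξ | ∃ i : Fin (q₀ + m), (i : ℕ) < q₀ + m ∧ ξ = fderiv ℝ (f i) x} := by
          have := hfspan (Fin.last m) x hx.1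
          rwa [hlm, Fin.val_last] at this
        rw [hQlm, ← Submodule.span_union]
        congr 1
        ext ξ
        constructor
        · rintro (⟨j, hj, rfl⟩ | ⟨i0, rfl⟩)
          · refine ⟨j.castSucc, by simp only [Fin.coe_castSucc, hlldef, Fin.val_last]; omega, ?_⟩
            rw [Fin.snoc_castSucc]
          · refine ⟨Fin.last _, by simp [hlldef], ?_⟩
            have h0 : i0 = 0 := Subsingleton.elim _ _
            rw [h0, Fin.snoc_last]
        · rintro ⟨i, hi, rfl⟩
          induction i using Fin.lastCases with
          | last =>
            right
            exact ⟨0, by rw [Fin.snoc_last]⟩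
          | cast j =>
            left
            exact ⟨j, j.isLt, by rw [Fin.snoc_castSucc]⟩
      | cast l' =>
        have := hfspan l' x hx.1
        rw [this]
        congr 1
        ext ξ
        have hl'm : (l' : ℕ) ≤ m := by omega
        constructor
        · rintro ⟨j, hj, rfl⟩
          refine ⟨j.castSucc, by simpa using hj, by rw [Fin.snoc_castSucc]⟩
        · rintro ⟨i, hi, rfl⟩
          rw [Fin.coe_castSucc] at hi
          have hi' : (i : ℕ) < q₀ + m := by omega
          have hieq : i = (⟨(i : ℕ), hi'⟩ : Fin (q₀ + m)).castSucc := by ext; rfl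
          refine ⟨⟨(i : ℕ), hi'⟩, hi, ?_⟩
          congr 1
          conv_lhs => rw [hieq]
          rw [Fin.snoc_castSucc]

lemma partII (N m q₀ : ℕ)
    (Q : Fin (m + 1) → (Fin N → ℝ) → Submodule ℝ ((Fin N → ℝ) →L[ℝ] ℝ))
    (hQ : ∀ l : Fin (m + 1), ConstRankInt N (q₀ + (l : ℕ)) (Q l))
    (hle : ∀ l : Fin m, ∀ x, Q l.castSucc x ≤ Q l.succ x)
    (hkN : q₀ + m ≤ N) (x₀ : Fin N → ℝ) :
    ∃ U : Set (Fin N → ℝ), U ∈ nhds x₀ ∧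
      ∃ z : Fin N → (Fin N → ℝ) → ℝ,
        (∀ i, ContDiffOn ℝ (⊤ : ℕ∞) (z i) U) ∧
        Set.InjOn (fun y => fun i => z i y) U ∧
        (∀ x ∈ U, Function.Bijective (fderiv ℝ (fun y => fun i => z i y) x)) ∧
        ∀ l : Fin (m + 1), ∀ x ∈ U,
          Q l x = Submodule.span ℝ
            {ξ | ∃ i : Fin N, (i : ℕ) < q₀ + (l : ℕ) ∧ ξ = fderiv ℝ (z i) x} := by
  classical
  haveI hFD : FiniteDimensional ℝ ((Fin N → ℝ) →L[ℝ] ℝ) := inferInstance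
  obtain ⟨U₁, hU₁, f, hfs, hfspan⟩ := chainLemma N m q₀ Q hQ hle x₀
  set U₂ := interior U₁ with hU₂def
  have hU₂open : IsOpen U₂ := isOpen_interior
  have hx₀U₂ : x₀ ∈ U₂ := mem_interior_iff_mem_nhds.2 hU₁
  have hU₂1 : U₂ ⊆ U₁ := interior_subset
  -- the span of the differentials of f at x₀ is Q_last
  have hspan_last : Q (Fin.last m) x₀ =
      Submodule.span ℝ (Set.range fun i => fderiv ℝ (f i) x₀) := by
    have := hfspan (Fin.last m) x₀ (mem_of_mem_nhds hU₁)
    rw [this]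
    congr 1
    ext ξ
    constructor
    · rintro ⟨i, _, rfl⟩; exact ⟨i, rfl⟩
    · rintro ⟨i, rfl⟩; exact ⟨i, by simpa using i.isLt, rfl⟩
  have hrk_last : finrank ℝ (Q (Fin.last m) x₀) = q₀ + m := by
    have := (hQ (Fin.last m)).1 x₀
    simpa using this
  -- extend by coordinate projections
  set P : Submodule ℝ ((Fin N → ℝ) →L[ℝ] ℝ) :=
    Submodule.span ℝ (Set.range fun i => fderiv ℝ (f i) x₀) with hPdef
  have hfrP : finrank ℝ P = q₀ + m := by rw [← hspan_last, hrk_last]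
  obtain ⟨σ, hσ⟩ := exists_subfamily (c := N - (q₀ + m)) P ⊤ le_top
    (fun j : Fin N => (ContinuousLinearMap.proj j : (Fin N → ℝ) →L[ℝ] ℝ))
    (span_proj N).symm
    (by rw [hfrP, finrank_top, finrank_dualCLM N]; omega)
  set φ : Fin (N - (q₀ + m)) → ((Fin N → ℝ) →L[ℝ] ℝ) :=
    fun j => (ContinuousLinearMap.proj (σ j) : (Fin N → ℝ) →L[ℝ] ℝ) with hφdef
  set wfun : Fin (q₀ + m) ⊕ Fin (N - (q₀ + m)) → (Fin N → ℝ) → ℝ :=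
    Sum.elim f (fun j => (φ j : (Fin N → ℝ) → ℝ)) with hwdef
  have hkr : (q₀ + m) + (N - (q₀ + m)) = N := by omega
  set e : Fin (q₀ + m) ⊕ Fin (N - (q₀ + m)) ≃ Fin N := finSumFinEquiv.trans (finCongr hkr)
    with hedef
  set z : Fin N → (Fin N → ℝ) → ℝ := fun i => wfun (e.symm i) with hzdef
  have hcoe : ∀ a : Fin (q₀ + m), ((e (Sum.inl a)) : ℕ) = (a : ℕ) := by
    intro a; simp [hedef]
  have hz1 : ∀ a : Fin (q₀ + m), z (e (Sum.inl a)) = f a := by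
    intro a; simp [hzdef, hwdef]
  -- smoothness
  have hzs : ∀ i, ContDiffOn ℝ (⊤ : ℕ∞) (z i) U₂ := by
    intro i
    show ContDiffOn ℝ (⊤ : ℕ∞) (wfun (e.symm i)) U₂
    rcases e.symm i with a | j
    · exact (hfs a).mono hU₂1
    · exact ((φ j).contDiff).contDiffOn
  -- derivative of each piece
  have hdw : ∀ (x : Fin N → ℝ) (s : Fin (q₀ + m) ⊕ Fin (N - (q₀ + m))),
      fderiv ℝ (wfun s) x = Sum.elim (fun a => fderiv ℝ (f a) x) φ s := by
    intro x s
    rcases s with a | j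
    · rfl
    · exact (φ j).fderiv
  -- independence of the full coframe at x₀
  have hzind₀ : LinearIndependent ℝ fun i => fderiv ℝ (z i) x₀ := by
    have hsum : LinearIndependent ℝ fun s => fderiv ℝ (wfun s) x₀ := by
      have h1 : (fun s => fderiv ℝ (wfun s) x₀) =
          Sum.elim (fun a => fderiv ℝ (f a) x₀) φ := by
        funext s; exact hdw x₀ s
      rw [h1, linearIndependent_iff_card_eq_finrank_span]
      have h2 : Set.range (Sum.elim (fun a => fderiv ℝ (f a) x₀) φ) =
          (Set.range fun a => fderiv ℝ (f a) x₀) ∪ Set.range φ := Sum.elim_range _ _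
      have h3 : (Set.range (Sum.elim (fun a => fderiv ℝ (f a) x₀) φ)).finrank ℝ = N := by
        unfold Set.finrank
        rw [h2, Submodule.span_union, ← hPdef]
        have h4 : Submodule.span ℝ (Set.range φ) = Submodule.span ℝ
            (Set.range ((fun j : Fin N =>
              (ContinuousLinearMap.proj j : (Fin N → ℝ) →L[ℝ] ℝ)) ∘ σ)) := rfl
        rw [h4, hσ, finrank_top, finrank_dualCLM N]
      rw [h3]
      simp
      omega
    have h2 : (fun i => fderiv ℝ (z i) x₀) =
        (fun s => fderiv ℝ (wfun s) x₀) ∘ e.symm := rfl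
    rw [h2]
    exact hsum.comp e.symm e.symm.injective
  -- independence on a neighborhood
  obtain ⟨V, hVopen, hx₀V, hVU₂, hVindep⟩ := indep_eventually z U₂ hU₂open hx₀U₂ hzs hzind₀
  set Z : (Fin N → ℝ) → (Fin N → ℝ) := fun y => fun i => z i y with hZdef
  have hdiffAt : ∀ x ∈ U₂, ∀ i, DifferentiableAt ℝ (z i) x := by
    intro x hx i
    exact ((hzs i).contDiffAt (hU₂open.mem_nhds hx)).differentiableAt (by simp)
  -- bijectivity of the total derivative
  have hbij : ∀ x ∈ V, Function.Bijective (fderiv ℝ Z x) := by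
    intro x hx
    have hdZ : fderiv ℝ Z x = ContinuousLinearMap.pi (fun i => fderiv ℝ (z i) x) :=
      fderiv_pi (fun i => hdiffAt x (hVU₂ hx) i)
    have hker : ∀ u, fderiv ℝ Z x u = 0 → u = 0 := by
      intro u hu
      rw [hdZ] at hu
      have hcomp : ∀ i, fderiv ℝ (z i) x u = 0 := by
        intro i
        have := congrFun hu i
        simpa using this
      have hspan_top : Submodule.span ℝ (Set.range fun i => fderiv ℝ (z i) x) = ⊤ := by
        apply (hVindep x hx).span_eq_top_of_card_eq_finrank'
        rw [Fintype.card_fin, finrank_dualCLM N]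
      have hall : ∀ ℓ : (Fin N → ℝ) →L[ℝ] ℝ, ℓ u = 0 := by
        intro ℓ
        have hℓ : ℓ ∈ Submodule.span ℝ (Set.range fun i => fderiv ℝ (z i) x) := by
          rw [hspan_top]; trivial
        induction hℓ using Submodule.span_induction with
        | mem ξ hξ => obtain ⟨i, rfl⟩ := hξ; exact hcomp i
        | zero => simp
        | add ξ η _ _ hξ hη => simp [hξ, hη]
        | smul a ξ _ hξ => simp [hξ]
      funext idx
      have := hall (ContinuousLinearMap.proj idx)
      simpa using this
    have hinj : Function.Injective (fderiv ℝ Z x) := by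
      intro u v huv
      have := hker (u - v) (by rw [map_sub, huv, sub_self])
      exact sub_eq_zero.mp this
    exact ⟨hinj, LinearMap.injective_iff_surjective.mp hinj⟩
  -- local injectivity via the inverse function theorem
  have hZat : ContDiffAt ℝ (⊤ : ℕ∞) Z x₀ := by
    rw [contDiffAt_pi]
    intro i
    exact (hzs i).contDiffAt (hU₂open.mem_nhds hx₀U₂)
  have hstrict : HasStrictFDerivAt Z (fderiv ℝ Z x₀) x₀ :=
    hZat.hasStrictFDerivAt (by simp)
  have hbij₀ := hbij x₀ hx₀V
  set Φ : (Fin N → ℝ) ≃L[ℝ] (Fin N → ℝ) :=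
    (LinearEquiv.ofBijective ((fderiv ℝ Z x₀) : (Fin N → ℝ) →ₗ[ℝ] (Fin N → ℝ))
      hbij₀).toContinuousLinearEquiv with hΦdef
  have hΦ : (Φ : (Fin N → ℝ) →L[ℝ] (Fin N → ℝ)) = fderiv ℝ Z x₀ := by
    ext v; rfl
  have hstrict' : HasStrictFDerivAt Z (Φ : (Fin N → ℝ) →L[ℝ] (Fin N → ℝ)) x₀ := by
    rw [hΦ]; exact hstrict
  set ph := hstrict'.toOpenPartialHomeomorph Z with hphdef
  have hsource : ph.source ∈ nhds x₀ :=
    ph.open_source.mem_nhds hstrict'.mem_toOpenPartialHomeomorph_source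
  have hinjOn : Set.InjOn Z ph.source := by
    have := ph.injOn
    rwa [show (ph : (Fin N → ℝ) → (Fin N → ℝ)) = Z from
      hstrict'.toOpenPartialHomeomorph_coe] at this
  -- final neighborhood
  refine ⟨V ∩ ph.source, Filter.inter_mem (hVopen.mem_nhds hx₀V) hsource, z,
    fun i => (hzs i).mono (fun x hx => hVU₂ hx.1), hinjOn.mono inter_subset_right,
    fun x hx => hbij x hx.1, ?_⟩
  intro l x hx
  have hxU₁ : x ∈ U₁ := hU₂1 (hVU₂ hx.1)
  rw [hfspan l x hxU₁]
  congr 1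
  ext ξ
  have hlm : (l : ℕ) ≤ m := by omega
  constructor
  · rintro ⟨a, ha, rfl⟩
    refine ⟨e (Sum.inl a), by rw [hcoe a]; exact ha, ?_⟩
    rw [hz1 a]
  · rintro ⟨i, hi, rfl⟩
    have hik : (i : ℕ) < q₀ + m := by omega
    set a : Fin (q₀ + m) := ⟨(i : ℕ), hik⟩ with hadef
    have hia : i = e (Sum.inl a) := by
      ext
      rw [hcoe a]
    refine ⟨a, by simpa [hadef] using hi, ?_⟩
    rw [hia, hz1 a]


/-- (i) If `Q ⊂ Q'` are completely integrable codistributions of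
constant ranks `q` and `q + c`, then locally there are functions `g¹, …, g^c` with
`Q' = Q + span{dg¹, …, dg^c}`.  (ii) In particular, a nested chain of completely
integrable codistributions, each of corank `1` in the next, can be simultaneously
straightened: there are local coordinates `z` in which
`Q_l = span{dz¹, …, dz^{q₀+l}}`. -/
theorem stmt16 (N : ℕ) :
    (∀ (q c : ℕ)
        (Q Q' : (Fin N → ℝ) → Submodule ℝ ((Fin N → ℝ) →L[ℝ] ℝ)),
      ConstRankInt N q Q → ConstRankInt N (q + c) Q' → (∀ x, Q x ≤ Q' x) →
      ∀ x₀ : Fin N → ℝ, ∃ U ∈ nhds x₀, ∃ g : Fin c → (Fin N → ℝ) → ℝ,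
        (∀ i, ContDiffOn ℝ (⊤ : ℕ∞) (g i) U) ∧
        ∀ x ∈ U, Q' x = Q x ⊔ Submodule.span ℝ (Set.range fun i => fderiv ℝ (g i) x)) ∧
    (∀ (m q₀ : ℕ)
        (Q : Fin (m + 1) → (Fin N → ℝ) → Submodule ℝ ((Fin N → ℝ) →L[ℝ] ℝ)),
      (∀ l : Fin (m + 1), ConstRankInt N (q₀ + (l : ℕ)) (Q l)) →
      (∀ l : Fin m, ∀ x, Q l.castSucc x ≤ Q l.succ x) →
      q₀ + m ≤ N →
      ∀ x₀ : Fin N → ℝ, ∃ U : Set (Fin N → ℝ), U ∈ nhds x₀ ∧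
        ∃ z : Fin N → (Fin N → ℝ) → ℝ,
          (∀ i, ContDiffOn ℝ (⊤ : ℕ∞) (z i) U) ∧
          Set.InjOn (fun y => fun i => z i y) U ∧
          (∀ x ∈ U, Function.Bijective (fderiv ℝ (fun y => fun i => z i y) x)) ∧
          ∀ l : Fin (m + 1), ∀ x ∈ U,
            Q l x = Submodule.span ℝ
              {ξ | ∃ i : Fin N, (i : ℕ) < q₀ + (l : ℕ) ∧ ξ = fderiv ℝ (z i) x}) := by
  constructor
  · exact fun q c Q Q' hQ hQ' hle x₀ => partI N q c Q Q' hQ hQ' hle x₀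
  · exact fun m q₀ Q hQ hle hkN x₀ => partII N m q₀ Q hQ hle hkN x₀
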